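/- A homogeneous linear map P : A_α → A_α of degree 0 is a Nijenhuis operator on A_α if and only if P = r·id_{A_α} for some r ∈ ℂ; that is, the degree-0 Nijenhuis operators on A_α are exactly the scalar multiples of the identity. -/
import Mathlib


open scoped TensorProduct

/-- A skew-symmetric bicharacter of an abelian group `G` over a field `k`. -/
structure Bicharacter (G : Type*) (k : Type*) [AddCommGroup G] [Field k] where
  ε : G → G → k
  ne_zero : ∀ a b : G, ε a b ≠ 0
  add_left : ∀ a b c : G, ε (a + b) c = ε a c * ε b c
  add_right : ∀ a b c : G, ε a (b + c) = ε a b * ε a c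
  skew : ∀ a b : G, ε a b * ε b a = 1

/-- `(A, 𝒜, μ)` is a left-symmetric color algebra over `k` with respect to the
skew-symmetric bicharacter `ε`: the grading `𝒜` is an internal direct sum
decomposition of `A`, the multiplication `μ` respects the grading, and the
left-symmetric color identity holds on homogeneous elements. -/
structure IsLSCA {G k A : Type*} [AddCommGroup G] [DecidableEq G] [Field k]
    [AddCommGroup A] [Module k A]
    (ε : Bicharacter G k) (𝒜 : G → Submodule k A) (μ : A →ₗ[k] A →ₗ[k] A) : Prop where
  internal : DirectSum.IsInternal 𝒜
  graded_mul : ∀ a b : G, ∀ x ∈ 𝒜 a, ∀ y ∈ 𝒜 b, μ x y ∈ 𝒜 (a + b)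
  left_symm : ∀ a b c : G, ∀ x ∈ 𝒜 a, ∀ y ∈ 𝒜 b, ∀ z ∈ 𝒜 c,
    μ (μ x y) z - μ x (μ y z) = ε.ε a b • (μ (μ y x) z - μ y (μ x z))

/-- `P` is a Nijenhuis operator on the left-symmetric color algebra `A`, homogeneous
of degree `c`:  `P(x)P(y) = ε(|P|+|x|,|P|) P(P(x)y) + P(x P(y)) − ε(|x|,|P|) P(P(xy))`
for all homogeneous `x, y`. -/
def IsNijenhuisOp {G k A : Type*} [AddCommGroup G] [Field k] [AddCommGroup A] [Module k A]
    (ε : Bicharacter G k) (𝒜 : G → Submodule k A) (μ : A →ₗ[k] A →ₗ[k] A)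
    (c : G) (P : A →ₗ[k] A) : Prop :=
  (∀ a : G, ∀ x ∈ 𝒜 a, P x ∈ 𝒜 (a + c)) ∧
  ∀ a b : G, ∀ x ∈ 𝒜 a, ∀ y ∈ 𝒜 b,
    μ (P x) (P y)
      = ε.ε (c + a) c • P (μ (P x) y) + P (μ x (P y)) - ε.ε a c • P (P (μ x y))

/-- `P` is a Rota-Baxter operator of weight `lam` on the left-symmetric color algebra
`A`, homogeneous of degree `c`:
`P(x)P(y) = ε(|P|+|x|,|P|) P(P(x)y) + P(x P(y)) + lam·P(xy)` for all homogeneous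
`x, y`. -/
def IsRotaBaxterOp {G k A : Type*} [AddCommGroup G] [Field k] [AddCommGroup A] [Module k A]
    (ε : Bicharacter G k) (𝒜 : G → Submodule k A) (μ : A →ₗ[k] A →ₗ[k] A)
    (c : G) (lam : k) (P : A →ₗ[k] A) : Prop :=
  (∀ a : G, ∀ x ∈ 𝒜 a, P x ∈ 𝒜 (a + c)) ∧
  ∀ a b : G, ∀ x ∈ 𝒜 a, ∀ y ∈ 𝒜 b,
    μ (P x) (P y)
      = ε.ε (c + a) c • P (μ (P x) y) + P (μ x (P y)) + lam • P (μ x y)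

/-- On the 2-dimensional proper left-symmetric color algebra `A_α`
over `ℂ` (basis `{x, y}`, `|x| = a`, `|y| = b = 2a`, unique nonzero product
`x·x = α·y`), a homogeneous linear map of degree `0` is a Nijenhuis operator if and
only if it is a scalar multiple of the identity. -/
theorem nijenhuis_degree_zero_on_Aalpha {G : Type*} [AddCommGroup G] [DecidableEq G]
    (a b : G) (hab : a + a = b) (hne : a ≠ b) (ha : a ≠ 0) (hb : b ≠ 0)
    (ε : Bicharacter G ℂ)
    {A : Type*} [AddCommGroup A] [Module ℂ A]
    (x y : A) (hind : LinearIndependent ℂ ![x, y])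
    (hspan : Submodule.span ℂ {x, y} = ⊤)
    (𝒜 : G → Submodule ℂ A)
    (h𝒜a : 𝒜 a = Submodule.span ℂ {x}) (h𝒜b : 𝒜 b = Submodule.span ℂ {y})
    (h𝒜 : ∀ g : G, g ≠ a → g ≠ b → 𝒜 g = ⊥)
    (α : ℂ) (hα : α ≠ 0)
    (μ : A →ₗ[ℂ] A →ₗ[ℂ] A)
    (hxx : μ x x = α • y) (hxy : μ x y = 0) (hyx : μ y x = 0) (hyy : μ y y = 0)
    (P : A →ₗ[ℂ] A) :
    IsNijenhuisOp ε 𝒜 μ 0 P ↔ ∃ r : ℂ, P = r • LinearMap.id := by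
  have hε0 : ∀ g : G, ε.ε g 0 = 1 := by
    intro g
    have h := ε.add_right g 0 0
    rw [add_zero] at h
    exact (mul_left_cancel₀ (ε.ne_zero g 0) (by rw [mul_one, ← h])).symm
  have hy0 : y ≠ 0 := by
    have := hind.ne_zero 1
    simpa using this
  constructor
  · rintro ⟨hdeg, heq⟩
    have hxmem : x ∈ 𝒜 a := by
      rw [h𝒜a]; exact Submodule.mem_span_singleton_self x
    have hymem : y ∈ 𝒜 b := by
      rw [h𝒜b]; exact Submodule.mem_span_singleton_self y
    obtain ⟨r, hr⟩ : ∃ r : ℂ, P x = r • x := by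
      have := hdeg a x hxmem
      rw [add_zero, h𝒜a, Submodule.mem_span_singleton] at this
      obtain ⟨r, hr⟩ := this; exact ⟨r, hr.symm⟩
    obtain ⟨s, hs⟩ : ∃ s : ℂ, P y = s • y := by
      have := hdeg b y hymem
      rw [add_zero, h𝒜b, Submodule.mem_span_singleton] at this
      obtain ⟨s, hs⟩ := this; exact ⟨s, hs.symm⟩
    have key := heq a a x hxmem x hxmem
    rw [hr] at key
    simp only [map_smul, LinearMap.smul_apply, hxx, hxy, hyx, hyy, hs, hε0,
      one_smul, smul_smul] at key
    have key2 : (r * (r * α) - (1 * (r * α * s) + r * α * s - 1 * (α * s * s))) • y = 0 := by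
      rw [sub_smul, sub_smul, add_smul, key]; abel
    have hco : r * (r * α) - (1 * (r * α * s) + r * α * s - 1 * (α * s * s)) = 0 :=
      (smul_eq_zero.mp key2).resolve_right hy0
    have h2 : α * (r - s) ^ 2 = 0 := by linear_combination hco
    have hrs : r = s := by
      have h3 := (mul_eq_zero.mp h2).resolve_left hα
      have h4 := pow_eq_zero_iff (two_ne_zero) |>.mp h3
      exact sub_eq_zero.mp h4
    refine ⟨r, ?_⟩
    apply LinearMap.ext_on hspan
    intro v hv
    rcases hv with hv | hv
    · subst hv; simpa using hr
    · simp only [Set.mem_singleton_iff] at hv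
      subst hv
      simp only [LinearMap.smul_apply, LinearMap.id_apply]
      rw [hs, hrs]
  · rintro ⟨r, rfl⟩
    refine ⟨?_, ?_⟩
    · intro g v hv
      rw [add_zero]
      exact Submodule.smul_mem _ _ hv
    · intro g h u hu v hv
      simp only [LinearMap.smul_apply, LinearMap.id_apply, map_smul,
        LinearMap.smul_apply, hε0, one_smul, smul_smul]
      module
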